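/- arXiv:1602.02393 — 4 statements merged into one kernel-verified Lean document; each statement's English description precedes it below -/
import Mathlib

section
/- Let (X,O_X) be a ringed finite space and M an O_X-module. Then M is quasi-coherent if and only if for every pair of points p ≤ q in X the natural morphism of O_q-modules M_p ⊗_{O_p} O_q → M_q (induced by the restriction map of M from the minimal open set U_p to U_q) is an isomorphism. -/
open TensorProduct

/-! # Ringed finite spaces

A ringed finite space `(X, O_X)` is modelled, following Alexandroff duality, as a finite
preordered set `X` (`p ≤ q` iff the minimal open set `U_q` is contained in `U_p`, i.e.
`U_p = Set.Ici p`) together with a ring `O p` for every point (the stalk at `p`, which equals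
the sections on `U_p`) and restriction ring homomorphisms `res : O p →+* O q` for `p ≤ q`,
functorial in `p ≤ q`.  Sheaves (of rings, abelian groups, modules) on the finite topological
space correspond exactly to such data. -/
structure FinRingedSpace where
  carrier : Type
  [fintypeCarrier : Fintype carrier]
  [preorderCarrier : Preorder carrier]
  O : carrier → Type
  [commRingO : ∀ p, CommRing (O p)]
  res : ∀ {p q : carrier}, p ≤ q → O p →+* O q
  res_refl : ∀ p : carrier, res (le_refl p) = RingHom.id (O p)
  res_trans : ∀ {p q r : carrier} (h₁ : p ≤ q) (h₂ : q ≤ r),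
    res (h₁.trans h₂) = (res h₂).comp (res h₁)

attribute [instance] FinRingedSpace.fintypeCarrier FinRingedSpace.preorderCarrier
  FinRingedSpace.commRingO

namespace FinRingedSpace

/-- The open subsets of the finite topological space associated to the preorder are exactly
the up-sets. -/
def IsOpen (X : FinRingedSpace) (U : Set X.carrier) : Prop :=
  ∀ ⦃p⦄, p ∈ U → ∀ ⦃q⦄, p ≤ q → q ∈ U

lemma isOpen_Ici (X : FinRingedSpace) (p : X.carrier) : X.IsOpen (Set.Ici p) :=
  fun _ hx _ h => le_trans hx h

/-- The open subspace of a ringed finite space given by a subset `U` (intended: an open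
(= upward closed) subset). -/
noncomputable def restrict (X : FinRingedSpace) (U : Set X.carrier) : FinRingedSpace where
  carrier := U
  fintypeCarrier := (Set.toFinite U).fintype
  preorderCarrier := inferInstance
  O p := X.O p.1
  commRingO p := inferInstance
  res {p q} h := X.res (Subtype.coe_le_coe.mpr h)
  res_refl p := X.res_refl p.1
  res_trans h₁ h₂ := X.res_trans _ _

/-- All restriction maps of `X` are flat: this is the defining property of a *finite space*
(as opposed to a mere ringed finite space). -/
def IsFiniteSpace (X : FinRingedSpace) : Prop :=
  ∀ {p q : X.carrier} (h : p ≤ q),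
    letI : Algebra (X.O p) (X.O q) := (X.res h).toAlgebra
    Module.Flat (X.O p) (X.O q)

end FinRingedSpace
/-! # Sheaves of modules on a ringed finite space

A sheaf of `O_X`-modules on a ringed finite space is equivalent to the data of an
`O p`-module `M p` for every point `p` (the stalk at `p` = sections on `U_p`), together with
additive restriction maps `M p →+ M q` for `p ≤ q` which are semilinear over the ring
restriction maps. -/
structure ModuleData (X : FinRingedSpace) where
  M : X.carrier → Type
  [addCommGroupM : ∀ p, AddCommGroup (M p)]
  [moduleM : ∀ p, Module (X.O p) (M p)]
  res : ∀ {p q : X.carrier}, p ≤ q → M p →+ M q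
  res_refl : ∀ p, res (le_refl p) = AddMonoidHom.id (M p)
  res_trans : ∀ {p q r : X.carrier} (h₁ : p ≤ q) (h₂ : q ≤ r),
    res (h₁.trans h₂) = (res h₂).comp (res h₁)
  res_smul : ∀ {p q : X.carrier} (h : p ≤ q) (a : X.O p) (m : M p),
    res h (a • m) = X.res h a • res h m

attribute [instance] ModuleData.addCommGroupM ModuleData.moduleM

/-- Given a ring homomorphism `ρ : R →+* S`, an `R`-module `M`, an `S`-module `N` and an
additive map `f : M →+ N` which is semilinear over `ρ`, this is the induced natural additive
map `M ⊗[R] S →+ N`, `m ⊗ s ↦ s • f m`  (the "base change" comparison map). -/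
noncomputable def tensorLift {R S M N : Type} [CommRing R] [CommRing S] (ρ : R →+* S)
    [AddCommGroup M] [Module R M] [AddCommGroup N] [Module S N]
    (f : M →+ N) (hf : ∀ (a : R) (m : M), f (a • m) = ρ a • f m) :
    (letI : Algebra R S := ρ.toAlgebra
     M ⊗[R] S) →+ N := by
  letI : Algebra R S := ρ.toAlgebra
  refine TensorProduct.liftAddHom
    (AddMonoidHom.mk' (fun m => AddMonoidHom.mk' (fun s => s • f m) ?_) ?_) ?_
  · intro s₁ s₂; show (s₁ + s₂) • f m = s₁ • f m + s₂ • f m; rw [add_smul]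
  · intro m m'; ext s; simp [smul_add]
  · intro r m s
    show s • f (r • m) = (r • s) • f m
    rw [hf, Algebra.smul_def, RingHom.algebraMap_toAlgebra, smul_smul, mul_comm]

namespace ModuleData

variable {X : FinRingedSpace}

/-- The natural morphism `M_p ⊗_{O_p} O_q → M_q` for `p ≤ q`. -/
noncomputable def baseChangeMap (N : ModuleData X) {p q : X.carrier} (h : p ≤ q) :=
  tensorLift (X.res h) (N.res h) (N.res_smul h)

/-- An `O_X`-module `M` is quasi-coherent iff for every `p ≤ q` the natural morphism
`M_p ⊗_{O_p} O_q → M_q` is an isomorphism (Theorem `qc`).  We use this stalkwise description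
as the definition; Statement 0 below identifies it with the usual sheaf-theoretic one. -/
def IsQuasiCoherent (N : ModuleData X) : Prop :=
  ∀ {p q : X.carrier} (h : p ≤ q), Function.Bijective (N.baseChangeMap h)

/-- The restriction of a sheaf of modules to a subspace. -/
noncomputable def restrict (N : ModuleData X) (U : Set X.carrier) :
    ModuleData (X.restrict U) where
  M p := N.M p.1
  addCommGroupM p := N.addCommGroupM p.1
  moduleM p := N.moduleM p.1
  res {p q} h := N.res (Subtype.coe_le_coe.mpr h)
  res_refl p := N.res_refl p.1
  res_trans h₁ h₂ := N.res_trans _ _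
  res_smul h a m := N.res_smul _ a m

end ModuleData

/-- The structure sheaf `O_X` viewed as a module over itself. -/
def FinRingedSpace.structureModule (X : FinRingedSpace) : ModuleData X where
  M p := X.O p
  res h := (X.res h).toAddMonoidHom
  res_refl p := by ext a; simp [X.res_refl p]
  res_trans h₁ h₂ := by ext a; simp [X.res_trans h₁ h₂]
  res_smul h a m := by simp [smul_eq_mul]
/-! # Free modules, morphisms of sheaves of modules, kernels -/

/-- The free `O_X`-module `O_X^{(I)}` on an index set `I`. -/
noncomputable def FinRingedSpace.free (X : FinRingedSpace) (I : Type) : ModuleData X where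
  M _p := I →₀ X.O _p
  res h := Finsupp.mapRange.addMonoidHom (X.res h).toAddMonoidHom
  res_refl p := by
    show Finsupp.mapRange.addMonoidHom (X.res (le_refl p)).toAddMonoidHom = _
    rw [X.res_refl]; ext f i; simp
  res_trans {p q r} h₁ h₂ := by
    show Finsupp.mapRange.addMonoidHom (X.res (h₁.trans h₂)).toAddMonoidHom = _
    rw [X.res_trans h₁ h₂]; ext f i; simp
  res_smul h a m := by
    ext i
    simp [smul_eq_mul]

/-- A morphism of sheaves of `O_X`-modules: an `O_p`-linear map on each stalk, commuting with
the (semilinear) restriction maps. -/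
structure ModuleData.Hom {X : FinRingedSpace} (M N : ModuleData X) where
  app : ∀ p, M.M p →ₗ[X.O p] N.M p
  comm : ∀ {p q : X.carrier} (h : p ≤ q) (m : M.M p),
    N.res h (app p m) = app q (M.res h m)

/-- The kernel of a morphism of sheaves of modules (stalkwise kernel). -/
noncomputable def ModuleData.kernelData {X : FinRingedSpace} {M N : ModuleData X}
    (φ : M.Hom N) : ModuleData X where
  M p := LinearMap.ker (φ.app p)
  res {p q} h := AddMonoidHom.mk'
    (fun m => ⟨M.res h m.1, LinearMap.mem_ker.mpr (by
      rw [← φ.comm h m.1, LinearMap.mem_ker.mp m.2, map_zero])⟩)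
    (fun a b => Subtype.ext (by
      show M.res h (a + b : LinearMap.ker (φ.app p)).1 = M.res h a.1 + M.res h b.1
      rw [Submodule.coe_add, map_add]))
  res_refl p := by
    ext m
    show M.res (le_refl p) m.1 = m.1
    rw [M.res_refl]; rfl
  res_trans {p q r} h₁ h₂ := by
    ext m
    show M.res (h₁.trans h₂) m.1 = _
    rw [M.res_trans h₁ h₂]; rfl
  res_smul h a m := Subtype.ext (by
    rw [Submodule.coe_smul]
    exact M.res_smul h a m.1)

/-- Sheaf-theoretic definition of quasi-coherence: each point has an open neighbourhood `U`
on which `M` is the cokernel of a morphism of free modules, i.e. there is an exact sequence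
`O|_U^{(I)} → O|_U^{(J)} → M|_U → 0`.  (On a finite topological space, exactness of a
sequence of sheaves is checked on stalks, and the stalk at a point of an open subset is the
stalk of the restriction.) -/
def ModuleData.IsQuasiCoherentSheaf {X : FinRingedSpace} (N : ModuleData X) : Prop :=
  ∀ x : X.carrier, ∃ U : Set X.carrier, X.IsOpen U ∧ x ∈ U ∧
    ∃ (I J : Type) (φ : ((X.restrict U).free I).Hom ((X.restrict U).free J))
      (ψ : ((X.restrict U).free J).Hom (N.restrict U)),
      (∀ p, Function.Surjective (ψ.app p)) ∧
      (∀ p, LinearMap.range (φ.app p) = LinearMap.ker (ψ.app p))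

/-- Sheaf-theoretic definition of being of finite type: each point has an open neighbourhood
`U` with an epimorphism `O|_U^n → M|_U → 0`. -/
def ModuleData.IsFiniteTypeSheaf {X : FinRingedSpace} (N : ModuleData X) : Prop :=
  ∀ x : X.carrier, ∃ U : Set X.carrier, X.IsOpen U ∧ x ∈ U ∧
    ∃ (n : ℕ) (ψ : ((X.restrict U).free (Fin n)).Hom (N.restrict U)),
      ∀ p, Function.Surjective (ψ.app p)

/-- Sheaf-theoretic definition of coherence: `M` is of finite type and, for every open `U`
and every morphism `O|_U^n → M|_U`, the kernel is of finite type. -/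
def ModuleData.IsCoherentSheaf {X : FinRingedSpace} (N : ModuleData X) : Prop :=
  N.IsFiniteTypeSheaf ∧
    ∀ (U : Set X.carrier), X.IsOpen U →
      ∀ (n : ℕ) (φ : ((X.restrict U).free (Fin n)).Hom (N.restrict U)),
        (ModuleData.kernelData φ).IsFiniteTypeSheaf
/-! ## STATEMENT 0
An `O_X`-module `M` on a ringed finite space is quasi-coherent (locally a cokernel of free
modules) if and only if for every `p ≤ q` the natural morphism `M_p ⊗_{O_p} O_q → M_q` is an
isomorphism. -/
section Aux

open Finsupp Function LinearMap

variable {R S M N I J : Type} [CommRing R] [CommRing S]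
  [AddCommGroup M] [Module R M] [AddCommGroup N] [Module S N]

/-- `mapRange` along a ring hom, as used in `FinRingedSpace.free`. -/
noncomputable abbrev mapR (ρ : R →+* S) {ι : Type} : (ι →₀ R) →+ (ι →₀ S) :=
  Finsupp.mapRange.addMonoidHom ρ.toAddMonoidHom

lemma mapR_smul (ρ : R →+* S) {ι : Type} (r : R) (x : ι →₀ R) :
    mapR ρ (r • x) = ρ r • mapR ρ x := by
  ext i
  simp [Finsupp.mapRange_apply]

lemma mapR_single (ρ : R →+* S) {ι : Type} (i : ι) (r : R) :
    mapR ρ (Finsupp.single i r) = Finsupp.single i (ρ r) := by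
  show Finsupp.mapRange ρ ρ.map_zero (Finsupp.single i r) = _
  exact Finsupp.mapRange_single

lemma tensorLift_tmul (ρ : R →+* S)
    (f : M →+ N) (hf : ∀ (a : R) (m : M), f (a • m) = ρ a • f m) (m : M) (s : S) :
    (letI : Algebra R S := ρ.toAlgebra
     tensorLift ρ f hf (m ⊗ₜ[R] s) = s • f m) := by
  letI : Algebra R S := ρ.toAlgebra
  show TensorProduct.liftAddHom _ _ (m ⊗ₜ[R] s) = s • f m
  rw [TensorProduct.liftAddHom_tmul]
  rfl

/-- Base change of a linear map from a free module, induced via a ring hom `ρ : R →+* S`. -/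
noncomputable def PhiS (ρ : R →+* S) (φ₀ : (I →₀ R) →ₗ[R] (J →₀ R)) :
    (I →₀ S) →ₗ[S] (J →₀ S) :=
  Finsupp.linearCombination S (fun i => mapR ρ (φ₀ (Finsupp.single i 1)))

/-- Base change of a linear map from a free module to `M`, landing in the `S`-module `N`
via a `ρ`-semilinear map `f : M →+ N`. -/
noncomputable def PsiS (ρ : R →+* S) (f : M →+ N) (ψ₀ : (J →₀ R) →ₗ[R] M) :
    (J →₀ S) →ₗ[S] N :=
  Finsupp.linearCombination S (fun j => f (ψ₀ (Finsupp.single j 1)))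

lemma PhiS_single (ρ : R →+* S) (φ₀ : (I →₀ R) →ₗ[R] (J →₀ R)) (i : I) (s : S) :
    PhiS ρ φ₀ (Finsupp.single i s) = s • mapR ρ (φ₀ (Finsupp.single i 1)) := by
  simp [PhiS]

lemma PsiS_single (ρ : R →+* S) (f : M →+ N) (ψ₀ : (J →₀ R) →ₗ[R] M) (j : J) (s : S) :
    PsiS ρ f ψ₀ (Finsupp.single j s) = s • f (ψ₀ (Finsupp.single j 1)) := by
  simp [PsiS]

end Aux

section Key

open Finsupp Function LinearMap TensorProduct

variable {R S M N I J : Type} [CommRing R] [CommRing S]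
  [AddCommGroup M] [Module R M] [AddCommGroup N] [Module S N]

theorem key (ρ : R →+* S) (f : M →+ N) (hf : ∀ (a : R) (m : M), f (a • m) = ρ a • f m)
    (φ₀ : (I →₀ R) →ₗ[R] (J →₀ R)) (ψ₀ : (J →₀ R) →ₗ[R] M)
    (hψ₀ : Function.Surjective ψ₀) (hex₀ : LinearMap.range φ₀ = LinearMap.ker ψ₀) :
    Function.Bijective (tensorLift ρ f hf) ↔
      (Function.Surjective (PsiS ρ f ψ₀) ∧
        LinearMap.range (PhiS ρ φ₀) = LinearMap.ker (PsiS ρ f ψ₀)) := by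
  letI : Algebra R S := ρ.toAlgebra
  have halg : ∀ r : R, algebraMap R S r = ρ r := fun r => rfl
  have hL : ∀ (m : M) (s : S), tensorLift ρ f hf (m ⊗ₜ[R] s) = s • f m :=
    tensorLift_tmul ρ f hf
  -- G : S ⊗[R] M →+ N
  let c : S ⊗[R] M ≃ₗ[R] M ⊗[R] S := TensorProduct.comm R S M
  let G : S ⊗[R] M →+ N := (tensorLift ρ f hf).comp c.toAddMonoidHom
  have hG : ∀ (s : S) (m : M), G (s ⊗ₜ[R] m) = s • f m := by
    intro s m
    show tensorLift ρ f hf (c (s ⊗ₜ m)) = s • f m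
    rw [show c (s ⊗ₜ m) = TensorProduct.comm R S M (s ⊗ₜ m) from rfl,
      TensorProduct.comm_tmul, hL]
  have hbij : Function.Bijective (tensorLift ρ f hf) ↔ Function.Bijective G := by
    constructor
    · intro h; exact h.comp c.bijective
    · intro h
      have : ∀ z, tensorLift ρ f hf z = G (c.symm z) := by
        intro z
        show _ = tensorLift ρ f hf (c (c.symm z))
        rw [c.apply_symm_apply]
      have hfun : ⇑(tensorLift ρ f hf) = ⇑G ∘ ⇑c.symm := funext this
      rw [hfun]
      exact h.comp c.symm.bijective
  -- Θ
  let Θ : (J →₀ S) →ₗ[S] S ⊗[R] M :=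
    Finsupp.linearCombination S (fun j => (1 : S) ⊗ₜ[R] ψ₀ (Finsupp.single j 1))
  have hΘ_single : ∀ (j : J) (s : S), Θ (Finsupp.single j s) = s ⊗ₜ[R] ψ₀ (Finsupp.single j 1) := by
    intro j s
    show Finsupp.linearCombination S _ _ = _
    rw [Finsupp.linearCombination_single, TensorProduct.smul_tmul', smul_eq_mul, mul_one]
  have hΘ_mapR : ∀ x : J →₀ R, Θ (mapR ρ x) = (1 : S) ⊗ₜ[R] ψ₀ x := by
    intro x
    induction x using Finsupp.induction_linear with
    | zero => simp
    | add a b ha hb => rw [map_add, map_add, ha, hb, map_add, TensorProduct.tmul_add]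
    | single j r =>
      rw [mapR_single, hΘ_single, show Finsupp.single j r = r • Finsupp.single j (1 : R) by
        rw [Finsupp.smul_single, smul_eq_mul, mul_one], map_smul, TensorProduct.tmul_smul,
        TensorProduct.smul_tmul', Algebra.smul_def, halg, mul_one]
  have hΘ_surj : Function.Surjective Θ := by
    intro t
    induction t using TensorProduct.induction_on with
    | zero => exact ⟨0, map_zero Θ⟩
    | tmul s m =>
      obtain ⟨x, rfl⟩ := hψ₀ m
      refine ⟨s • mapR ρ x, ?_⟩
      rw [map_smul, hΘ_mapR, TensorProduct.smul_tmul', smul_eq_mul, mul_one]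
    | add a b ha hb =>
      obtain ⟨y, hy⟩ := ha
      obtain ⟨z, hz⟩ := hb
      exact ⟨y + z, by rw [map_add, hy, hz]⟩
  have hGΘ : ∀ y, G (Θ y) = PsiS ρ f ψ₀ y := by
    intro y
    induction y using Finsupp.induction_linear with
    | zero => simp
    | add a b ha hb => rw [map_add, map_add, ha, hb, map_add]
    | single j s => rw [hΘ_single, hG, PsiS_single]
  have hΘΦ : ∀ w, Θ (PhiS ρ φ₀ w) = 0 := by
    intro w
    induction w using Finsupp.induction_linear with
    | zero => simp
    | add a b ha hb => rw [map_add, map_add, ha, hb, add_zero]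
    | single i s =>
      rw [PhiS_single, map_smul, hΘ_mapR]
      have : φ₀ (Finsupp.single i 1) ∈ LinearMap.ker ψ₀ := by
        rw [← hex₀]; exact ⟨_, rfl⟩
      rw [LinearMap.mem_ker.mp this, TensorProduct.tmul_zero, smul_zero]
  -- the free base change equivalences
  let e : ∀ (ι : Type), (ι →₀ S) →ₗ[S] S ⊗[R] (ι →₀ R) := fun ι =>
    Finsupp.linearCombination S (fun i => (1 : S) ⊗ₜ[R] Finsupp.single i 1)
  have he_single : ∀ (ι : Type) (i : ι) (s : S),
      e ι (Finsupp.single i s) = s ⊗ₜ[R] Finsupp.single i 1 := by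
    intro ι i s
    show Finsupp.linearCombination S _ _ = _
    rw [Finsupp.linearCombination_single, TensorProduct.smul_tmul', smul_eq_mul, mul_one]
  have he_mapR : ∀ (ι : Type) (x : ι →₀ R), e ι (mapR ρ x) = (1 : S) ⊗ₜ[R] x := by
    intro ι x
    induction x using Finsupp.induction_linear with
    | zero => simp
    | add a b ha hb => rw [map_add, map_add, ha, hb, TensorProduct.tmul_add]
    | single i r =>
      rw [mapR_single, he_single, show Finsupp.single i r = r • Finsupp.single i (1 : R) by
        rw [Finsupp.smul_single, smul_eq_mul, mul_one], TensorProduct.tmul_smul,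
        TensorProduct.smul_tmul', Algebra.smul_def, halg, mul_one]
  have he_bij : ∀ (ι : Type), Function.Bijective (e ι) := by
    intro ι
    have hsl : ∀ (a : R) (x : ι →₀ R), mapR ρ (a • x) = ρ a • mapR ρ x := mapR_smul ρ
    let d : (ι →₀ R) ⊗[R] S →+ (ι →₀ S) := tensorLift ρ (mapR ρ) hsl
    have hd : ∀ (x : ι →₀ R) (s : S), d (x ⊗ₜ s) = s • mapR ρ x :=
      tensorLift_tmul ρ (mapR ρ) hsl
    let c' : S ⊗[R] (ι →₀ R) ≃ₗ[R] (ι →₀ R) ⊗[R] S := TensorProduct.comm R S (ι →₀ R)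
    have hleft : ∀ y : ι →₀ S, d (c' (e ι y)) = y := by
      intro y
      induction y using Finsupp.induction_linear with
      | zero => rw [(e ι).map_zero, c'.map_zero, d.map_zero]
      | add a b ha hb => rw [(e ι).map_add, c'.map_add, d.map_add, ha, hb]
      | single i s =>
        rw [he_single, show c' (s ⊗ₜ Finsupp.single i 1) =
            TensorProduct.comm R S (ι →₀ R) (s ⊗ₜ Finsupp.single i 1) from rfl,
          TensorProduct.comm_tmul, hd, mapR_single, map_one, Finsupp.smul_single,
          smul_eq_mul, mul_one]
    have hright : ∀ t : S ⊗[R] (ι →₀ R), e ι (d (c' t)) = t := by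
      intro t
      induction t using TensorProduct.induction_on with
      | zero => rw [c'.map_zero, d.map_zero, (e ι).map_zero]
      | tmul s x =>
        rw [show c' (s ⊗ₜ x) = TensorProduct.comm R S (ι →₀ R) (s ⊗ₜ x) from rfl,
          TensorProduct.comm_tmul, hd, (e ι).map_smul, he_mapR,
          TensorProduct.smul_tmul', smul_eq_mul, mul_one]
      | add a b ha hb => rw [c'.map_add, d.map_add, (e ι).map_add, ha, hb]
    constructor
    · intro a b hab
      have := congrArg (fun z => d (c' z)) hab
      simpa [hleft] using this
    · intro t
      exact ⟨d (c' t), hright t⟩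
  -- relations with lTensor
  have hΘe : ∀ y, Θ y = LinearMap.lTensor S ψ₀ (e J y) := by
    intro y
    induction y using Finsupp.induction_linear with
    | zero => simp
    | add a b ha hb => rw [map_add, map_add, map_add, ha, hb]
    | single j s => rw [hΘ_single, he_single, LinearMap.lTensor_tmul]
  have hΦe : ∀ w, e J (PhiS ρ φ₀ w) = LinearMap.lTensor S φ₀ (e I w) := by
    intro w
    induction w using Finsupp.induction_linear with
    | zero => simp
    | add a b ha hb => rw [map_add, map_add, map_add, map_add, ha, hb]
    | single i s =>
      rw [PhiS_single, map_smul, he_mapR, he_single, LinearMap.lTensor_tmul,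
        TensorProduct.smul_tmul', smul_eq_mul, mul_one]
  have hexT : Function.Exact (LinearMap.lTensor S φ₀) (LinearMap.lTensor S ψ₀) :=
    lTensor_exact S (LinearMap.exact_iff.mpr hex₀.symm) hψ₀
  rw [hbij]
  constructor
  · rintro ⟨hGi, hGs⟩
    constructor
    · intro n
      obtain ⟨t, rfl⟩ := hGs n
      obtain ⟨y, rfl⟩ := hΘ_surj t
      exact ⟨y, (hGΘ y).symm⟩
    · apply le_antisymm
      · rintro _ ⟨w, rfl⟩
        rw [LinearMap.mem_ker, ← hGΘ, hΘΦ, map_zero]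
      · intro y hy
        have h0 : G (Θ y) = 0 := by rw [hGΘ]; exact LinearMap.mem_ker.mp hy
        have hΘy : Θ y = 0 := by
          apply hGi
          rw [h0, map_zero]
        rw [hΘe] at hΘy
        obtain ⟨z, hz⟩ := (hexT _).mp hΘy
        obtain ⟨w, rfl⟩ := (he_bij I).surjective z
        refine ⟨w, (he_bij J).injective ?_⟩
        rw [hΦe, hz]
  · rintro ⟨hΨs, hΨex⟩
    constructor
    · intro a b hab
      have : ∀ t, G t = 0 → t = 0 := by
        intro t ht
        obtain ⟨y, rfl⟩ := hΘ_surj t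
        have : y ∈ LinearMap.ker (PsiS ρ f ψ₀) := by
          rw [LinearMap.mem_ker, ← hGΘ, ht]
        rw [← hΨex] at this
        obtain ⟨w, rfl⟩ := this
        exact hΘΦ w
      have := this (a - b) (by rw [map_sub, hab, sub_self])
      exact sub_eq_zero.mp this
    · intro n
      obtain ⟨y, hy⟩ := hΨs n
      exact ⟨Θ y, by rw [hGΘ, hy]⟩

end Key

section MainAux

open Finsupp Function LinearMap

lemma FinRingedSpace.res_res (X : FinRingedSpace) {p q r : X.carrier}
    (h₁ : p ≤ q) (h₂ : q ≤ r) (a : X.O p) :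
    X.res h₂ (X.res h₁ a) = X.res (h₁.trans h₂) a := by
  rw [X.res_trans h₁ h₂]; rfl

lemma ModuleData.res_res {X : FinRingedSpace} (N : ModuleData X) {p q r : X.carrier}
    (h₁ : p ≤ q) (h₂ : q ≤ r) (m : N.M p) :
    N.res h₂ (N.res h₁ m) = N.res (h₁.trans h₂) m := by
  rw [N.res_trans h₁ h₂]; rfl

end MainAux

open Finsupp Function LinearMap in
theorem quasiCoherentSheaf_iff_baseChange_bijective
    (X : FinRingedSpace) (N : ModuleData X) :
    N.IsQuasiCoherentSheaf ↔
      ∀ {p q : X.carrier} (h : p ≤ q), Function.Bijective (N.baseChangeMap h) := by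
  constructor
  · intro hqc p q h
    obtain ⟨U, hUopen, hpU, I, J, φ, ψ, hsurj, hex⟩ := hqc p
    have hqU : q ∈ U := hUopen hpU h
    let P : (X.restrict U).carrier := ⟨p, hpU⟩
    let Q : (X.restrict U).carrier := ⟨q, hqU⟩
    have hPQ : P ≤ Q := h
    have hψQ : ψ.app Q = PsiS (X.res h) (N.res h) (ψ.app P) := by
      refine Finsupp.lhom_ext' fun j => LinearMap.ext_ring ?_
      have hc := ψ.comm hPQ (Finsupp.single j (1 : X.O p))
      have h1 : (((X.restrict U).free J).res hPQ) (Finsupp.single j (1 : X.O p)) =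
          Finsupp.single j (1 : X.O q) := by
        show mapR (X.res h) (Finsupp.single j 1) = _
        rw [mapR_single, map_one]
      show ψ.app Q (Finsupp.single j (1 : X.O q)) =
        PsiS (X.res h) (N.res h) (ψ.app P) (Finsupp.single j (1 : X.O q))
      exact (congrArg (ψ.app Q) h1.symm).trans (hc.symm.trans
        ((PsiS_single (X.res h) (N.res h) (ψ.app P) j 1).trans (one_smul _ _)).symm)
    have hφQ : φ.app Q = PhiS (X.res h) (φ.app P) := by
      refine Finsupp.lhom_ext' fun i => LinearMap.ext_ring ?_
      have hc := φ.comm hPQ (Finsupp.single i (1 : X.O p))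
      have h1 : (((X.restrict U).free I).res hPQ) (Finsupp.single i (1 : X.O p)) =
          Finsupp.single i (1 : X.O q) := by
        show mapR (X.res h) (Finsupp.single i 1) = _
        rw [mapR_single, map_one]
      show φ.app Q (Finsupp.single i (1 : X.O q)) =
        PhiS (X.res h) (φ.app P) (Finsupp.single i (1 : X.O q))
      exact (congrArg (φ.app Q) h1.symm).trans (hc.symm.trans
        ((PhiS_single (X.res h) (φ.app P) i 1).trans (one_smul _ _)).symm)
    exact (key (X.res h) (N.res h) (N.res_smul h) (φ.app P) (ψ.app P) (hsurj P) (hex P)).mpr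
      ⟨by have := hsurj Q; rw [hψQ] at this; exact this,
        by have := hex Q; rw [hψQ, hφQ] at this; exact this⟩
  · intro hbc x
    classical
    set R := X.O x with hR
    let ψ₀ : (N.M x →₀ R) →ₗ[R] N.M x := Finsupp.linearCombination R _root_.id
    have hψ₀ : Function.Surjective ψ₀ := fun m =>
      ⟨Finsupp.single m 1, by simp [ψ₀]⟩
    let K := LinearMap.ker ψ₀
    let φ₀ : (↥K →₀ R) →ₗ[R] (N.M x →₀ R) := Finsupp.linearCombination R Subtype.val
    have hcomp : ∀ k : ↥K, ψ₀ (k : N.M x →₀ R) = 0 := fun k => k.2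
    have hex₀ : LinearMap.range φ₀ = LinearMap.ker ψ₀ := by
      apply le_antisymm
      · rw [LinearMap.range_le_ker_iff]
        refine Finsupp.lhom_ext' fun k => LinearMap.ext_ring ?_
        show ψ₀ (φ₀ (Finsupp.single k 1)) = 0
        have hk : φ₀ (Finsupp.single k 1) = (k : N.M x →₀ R) := by
          simp [φ₀]
        rw [hk]
        exact hcomp k
      · intro y hy
        exact ⟨Finsupp.single ⟨y, hy⟩ 1, by simp [φ₀]⟩
    refine ⟨Set.Ici x, X.isOpen_Ici x, le_refl x, ↥K, N.M x,
      ⟨fun P => PhiS (X.res P.2) φ₀, ?_⟩,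
      ⟨fun P => PsiS (X.res P.2) (N.res P.2) ψ₀, ?_⟩, ?_, ?_⟩
    · intro (P : ↥(Set.Ici x)) (Q : ↥(Set.Ici x)) h (m : ↥K →₀ X.O P.1)
      have h' : P.1 ≤ Q.1 := h
      induction m using Finsupp.induction_linear with
      | zero =>
        show mapR (X.res h') (PhiS (X.res P.2) φ₀ 0) = PhiS (X.res Q.2) φ₀ (mapR (X.res h') 0)
        simp only [map_zero]
      | add a b ha hb =>
        show mapR (X.res h') (PhiS (X.res P.2) φ₀ (a + b)) =
          PhiS (X.res Q.2) φ₀ (mapR (X.res h') (a + b))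
        rw [map_add, map_add, map_add, map_add]
        exact congrArg₂ (· + ·) ha hb
      | single i s =>
        show mapR (X.res h') (PhiS (X.res P.2) φ₀ (Finsupp.single i s)) =
          PhiS (X.res Q.2) φ₀ (mapR (X.res h') (Finsupp.single i s))
        rw [PhiS_single, mapR_smul, mapR_single, PhiS_single]
        congr 1
        ext j
        show X.res h' (X.res P.2 _) = X.res Q.2 _
        rw [X.res_res P.2 h']
    · intro (P : ↥(Set.Ici x)) (Q : ↥(Set.Ici x)) h (m : N.M x →₀ X.O P.1)
      have h' : P.1 ≤ Q.1 := h
      induction m using Finsupp.induction_linear with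
      | zero =>
        show N.res h' (PsiS (X.res P.2) (N.res P.2) ψ₀ 0) =
          PsiS (X.res Q.2) (N.res Q.2) ψ₀ (mapR (X.res h') 0)
        simp only [map_zero]
      | add a b ha hb =>
        show N.res h' (PsiS (X.res P.2) (N.res P.2) ψ₀ (a + b)) =
          PsiS (X.res Q.2) (N.res Q.2) ψ₀ (mapR (X.res h') (a + b))
        rw [map_add, map_add, map_add, map_add]
        exact congrArg₂ (· + ·) ha hb
      | single j s =>
        show N.res h' (PsiS (X.res P.2) (N.res P.2) ψ₀ (Finsupp.single j s)) =
          PsiS (X.res Q.2) (N.res Q.2) ψ₀ (mapR (X.res h') (Finsupp.single j s))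
        rw [PsiS_single, N.res_smul h', mapR_single, PsiS_single, N.res_res P.2 h']
    · intro P
      exact ((key (X.res P.2) (N.res P.2) (N.res_smul P.2) φ₀ ψ₀ hψ₀ hex₀).mp (hbc P.2)).1
    · intro P
      exact ((key (X.res P.2) (N.res P.2) (N.res_smul P.2) φ₀ ψ₀ hψ₀ hex₀).mp (hbc P.2)).2
end

section
/- Let (X,O_X) be a ringed finite space and M an O_X-module. Then M is of finite type (i.e., every point has an open neighborhood U with an epimorphism O|_U^n → M|_U → 0 for some natural number n) if and only if: (a) for each p ∈ X the stalk M_p is a finitely generated O_p-module, and (b) for each p ≤ q the natural morphism M_p ⊗_{O_p} O_q → M_q is surjective. -/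
open TensorProduct

/-! ## STATEMENT 1
An `O_X`-module `M` on a ringed finite space is of finite type (locally a quotient of a
finite free module) iff all stalks `M_p` are finitely generated `O_p`-modules and all the
natural maps `M_p ⊗_{O_p} O_q → M_q` (`p ≤ q`) are surjective. -/
section Aux

variable {X : FinRingedSpace}

lemma ModuleData.baseChangeMap_tmul (N : ModuleData X) {p q : X.carrier} (h : p ≤ q)
    (m : N.M p) (s : X.O q) :
    letI : Algebra (X.O p) (X.O q) := (X.res h).toAlgebra
    N.baseChangeMap h (m ⊗ₜ[X.O p] s) = s • N.res h m := rfl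

lemma ModuleData.surjective_baseChangeMap_iff (N : ModuleData X) {p q : X.carrier}
    (h : p ≤ q) :
    Function.Surjective (N.baseChangeMap h) ↔
      ∀ m : N.M q, m ∈ Submodule.span (X.O q) (Set.range (N.res h)) := by
  letI : Algebra (X.O p) (X.O q) := (X.res h).toAlgebra
  constructor
  · intro hs m
    obtain ⟨x, rfl⟩ := hs m
    induction x using TensorProduct.induction_on with
    | zero => rw [map_zero]; exact Submodule.zero_mem _
    | tmul m s =>
        rw [N.baseChangeMap_tmul h]
        exact Submodule.smul_mem _ _ (Submodule.subset_span ⟨m, rfl⟩)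
    | add x y hx hy => rw [map_add]; exact Submodule.add_mem _ hx hy
  · intro hs m
    have smul_range : ∀ (s : X.O q) (a : N.M p ⊗[X.O p] (X.O q)),
        ∃ y, N.baseChangeMap h y = s • N.baseChangeMap h a := by
      intro s a
      induction a using TensorProduct.induction_on with
      | zero => exact ⟨0, by simp⟩
      | tmul m t =>
          exact ⟨m ⊗ₜ (s * t), by
            rw [N.baseChangeMap_tmul h, N.baseChangeMap_tmul h, mul_smul]⟩
      | add x y hx hy =>
          obtain ⟨u, hu⟩ := hx; obtain ⟨v, hv⟩ := hy
          exact ⟨u + v, by rw [map_add, map_add, hu, hv, smul_add]⟩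
    have key : ∀ m' : N.M q, m' ∈ Submodule.span (X.O q) (Set.range (N.res h)) →
        ∃ x, N.baseChangeMap h x = m' := by
      intro m' hm'
      induction hm' using Submodule.span_induction with
      | mem m' hm' =>
          obtain ⟨a, rfl⟩ := hm'
          exact ⟨a ⊗ₜ 1, by rw [N.baseChangeMap_tmul h, one_smul]⟩
      | zero => exact ⟨0, map_zero _⟩
      | add x y _ _ hx hy =>
          obtain ⟨a, ha⟩ := hx; obtain ⟨b, hb⟩ := hy
          exact ⟨a + b, by rw [map_add, ha, hb]⟩
      | smul s x _ hx =>
          obtain ⟨a, rfl⟩ := hx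
          exact smul_range s a
    exact key m (hs m)

lemma ModuleData.res_mem_span (N : ModuleData X) {p q : X.carrier} (h : p ≤ q)
    (g : Set (N.M p)) (m : N.M p) (hm : m ∈ Submodule.span (X.O p) g) :
    N.res h m ∈ Submodule.span (X.O q) (N.res h '' g) := by
  induction hm using Submodule.span_induction with
  | mem x hx => exact Submodule.subset_span ⟨x, hx, rfl⟩
  | zero => rw [map_zero]; exact Submodule.zero_mem _
  | add x y _ _ hx hy => rw [map_add]; exact Submodule.add_mem _ hx hy
  | smul a x _ hx => rw [N.res_smul]; exact Submodule.smul_mem _ _ hx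

lemma ModuleData.comm_aux (N : ModuleData X) {n : ℕ} {x p q : X.carrier}
    (hp : x ≤ p) (hq : x ≤ q) (h : p ≤ q) (g : Fin n → N.M x) (f : Fin n →₀ X.O p) :
    N.res h (Finsupp.linearCombination (X.O p) (fun i => N.res hp (g i)) f) =
      Finsupp.linearCombination (X.O q) (fun i => N.res hq (g i))
        (Finsupp.mapRange.addMonoidHom (X.res h).toAddMonoidHom f) := by
  induction f using Finsupp.induction_linear with
  | zero => rw [_root_.map_zero, _root_.map_zero, _root_.map_zero, _root_.map_zero]
  | add f g hf hg =>
      rw [_root_.map_add, _root_.map_add, _root_.map_add, _root_.map_add, hf, hg]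
  | single i b =>
      rw [Finsupp.mapRange.addMonoidHom_apply, Finsupp.mapRange_single,
        Finsupp.linearCombination_single, Finsupp.linearCombination_single, N.res_smul]
      congr 1
      rw [← AddMonoidHom.comp_apply, ← N.res_trans hp h]

end Aux

theorem finiteTypeSheaf_iff (X : FinRingedSpace) (N : ModuleData X) :
    N.IsFiniteTypeSheaf ↔
      (∀ p : X.carrier, Module.Finite (X.O p) (N.M p)) ∧
      (∀ {p q : X.carrier} (h : p ≤ q), Function.Surjective (N.baseChangeMap h)) := by
  constructor
  · intro hft
    constructor
    · intro p
      obtain ⟨U, hU, hpU, n, ψ, hψ⟩ := hft p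
      exact Module.Finite.of_surjective
        (R := X.O p) (M := Fin n →₀ X.O p)
        (ψ.app ⟨p, hpU⟩ : (Fin n →₀ X.O p) →ₗ[X.O p] N.M p) (hψ ⟨p, hpU⟩)
    · intro p q hpq
      obtain ⟨U, hU, hpU, n, ψ, hψ⟩ := hft p
      have hqU : q ∈ U := hU hpU hpq
      set p' : (X.restrict U).carrier := ⟨p, hpU⟩
      set q' : (X.restrict U).carrier := ⟨q, hqU⟩
      have h' : p' ≤ q' := hpq
      rw [N.surjective_baseChangeMap_iff]
      intro m
      let φq : (Fin n →₀ X.O q) →ₗ[X.O q] N.M q := ψ.app q'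
      have hφ : Function.Surjective φq := hψ q'
      obtain ⟨f, rfl⟩ := hφ m
      have hmem : ∀ i : Fin n,
          φq (Finsupp.single i (1 : X.O q)) ∈
            Set.range (N.res hpq) := by
        intro i
        refine ⟨(ψ.app p' : (Fin n →₀ X.O p) →ₗ[X.O p] N.M p)
          (Finsupp.single i (1 : X.O p)), ?_⟩
        have harg : (((X.restrict U).free (Fin n)).res h') (Finsupp.single i (1 : X.O p))
            = Finsupp.single i (1 : X.O q) := by
          show Finsupp.mapRange.addMonoidHom (X.res hpq).toAddMonoidHom
              (Finsupp.single i (1 : X.O p)) = _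
          rw [Finsupp.mapRange.addMonoidHom_apply, Finsupp.mapRange_single]
          simp
        have hc := ψ.comm h' (Finsupp.single i (1 : X.O p))
        exact hc.trans (congrArg _ harg)
      -- every element of the image of `ψ.app q'` lies in the span of the range of `N.res`
      induction f using Finsupp.induction_linear with
      | zero => rw [map_zero]; exact Submodule.zero_mem _
      | add f g hf hg => rw [map_add]; exact Submodule.add_mem _ hf hg
      | single i b =>
          have hb : (Finsupp.single i b : Fin n →₀ X.O q)
              = b • Finsupp.single i (1 : X.O q) := by
            rw [Finsupp.smul_single', mul_one]
          rw [hb, map_smul]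
          exact Submodule.smul_mem _ _ (Submodule.subset_span (hmem i))
  · rintro ⟨hfin, hsurj⟩ x
    refine ⟨Set.Ici x, X.isOpen_Ici x, le_refl x, ?_⟩
    obtain ⟨n, g, hg⟩ := Module.Finite.exists_fin (R := X.O x) (M := N.M x)
    refine ⟨n, ⟨fun p => (Finsupp.linearCombination (X.O p.1)
      (fun i => N.res (p.2 : x ≤ p.1) (g i)) :
        (Fin n →₀ X.O p.1) →ₗ[X.O p.1] N.M p.1), ?_⟩, ?_⟩
    · intro p q h f
      exact N.comm_aux p.2 q.2 (Subtype.coe_le_coe.mpr h) g f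
    · intro p f
      -- surjectivity of the linear combination map at `p`
      have hrange : ∀ m : N.M p.1, m ∈ Submodule.span (X.O p.1)
          (Set.range fun i => N.res p.2 (g i)) := by
        intro m
        have hm := (N.surjective_baseChangeMap_iff p.2).mp (hsurj p.2) m
        have hsub : Set.range (N.res (p.2 : x ≤ p.1)) ⊆
            (Submodule.span (X.O p.1) (Set.range fun i => N.res p.2 (g i)) : Set _) := by
          rintro _ ⟨m', rfl⟩
          have hm' : m' ∈ Submodule.span (X.O x) (Set.range g) := hg ▸ Submodule.mem_top
          have := N.res_mem_span p.2 (Set.range g) m' hm'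
          refine Submodule.span_le.mpr ?_ this
          rintro _ ⟨_, ⟨i, rfl⟩, rfl⟩
          exact Submodule.subset_span ⟨i, rfl⟩
        exact Submodule.span_le.mpr hsub hm
      have : LinearMap.range (Finsupp.linearCombination (X.O p.1)
          (fun i => N.res p.2 (g i))) = ⊤ := by
        rw [Finsupp.range_linearCombination]
        exact eq_top_iff.mpr fun m _ => hrange m
      exact (LinearMap.range_eq_top.mp this) f
end

section
/- Let (X,O_X) be a ringed finite space. The structure sheaf O_X is coherent as a module over itself if and only if: (a) for each p ∈ X the ring O_p is a coherent ring, and (b) for each p ≤ q the restriction homomorphism O_p → O_q is flat. In particular, if all the rings O_p are noetherian, then O_X is coherent if and only if all restriction maps O_p → O_q (p ≤ q) are flat. -/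
open TensorProduct

/-- A module over a commutative ring is *coherent* if it is finitely generated and every
finitely generated submodule is finitely presented. -/
def Module.IsCoherentModule (R M : Type) [CommRing R] [AddCommGroup M] [Module R M] : Prop :=
  Module.Finite R M ∧ ∀ N : Submodule R M, N.FG → Module.FinitePresentation R N

/-- A commutative ring is *coherent* if every finitely generated ideal is finitely
presented. -/
def IsCoherentRing (R : Type) [CommRing R] : Prop :=
  ∀ I : Ideal R, I.FG → Module.FinitePresentation R I


/-! ## Auxiliary machinery -/

section CoherentAux

open Finsupp

/-- A commutative ring is coherent iff kernels of maps `R^n → R` are finitely generated. -/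
lemma isCoherentRing_iff_ker_fg {R : Type} [CommRing R] :
    IsCoherentRing R ↔ ∀ (n : ℕ) (f : (Fin n →₀ R) →ₗ[R] R), (LinearMap.ker f).FG := by
  constructor
  · intro hR n f
    have hIfg : (LinearMap.range f).FG := by
      have h1 : (⊤ : Submodule R (Fin n →₀ R)).FG := Module.Finite.fg_top
      have h2 := h1.map f
      rwa [Submodule.map_top] at h2
    have hfp : Module.FinitePresentation R (LinearMap.range f) := hR _ hIfg
    have h3 := (Module.FinitePresentation.fg_ker_iff f.rangeRestrict
      f.surjective_rangeRestrict).mpr hfp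
    rwa [LinearMap.ker_rangeRestrict] at h3
  · intro hker I hI
    obtain ⟨m, s, hs⟩ := Submodule.fg_iff_exists_fin_generating_family.mp hI
    have hrange : LinearMap.range (Finsupp.linearCombination R s) = I := by
      rw [Finsupp.range_linearCombination, hs]
    have hfp : Module.FinitePresentation R
        (LinearMap.range (Finsupp.linearCombination R s)) :=
      Module.finitePresentation_of_surjective
        (Finsupp.linearCombination R s).rangeRestrict
        (Finsupp.linearCombination R s).surjective_rangeRestrict
        (by rw [LinearMap.ker_rangeRestrict]; exact hker m _)
    exact hrange ▸ hfp

lemma isCoherentRing_of_noetherian (R : Type) [CommRing R] (h : IsNoetherianRing R) :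
    IsCoherentRing R := fun I hI =>
  haveI := h
  haveI : Module.Finite R I := Module.Finite.iff_fg.mpr hI
  Module.finitePresentation_of_finite _ _

namespace FinRingedSpace

/-- Semilinear maps intertwine linear combinations. -/
lemma semilinear_linearCombination {R S M N' : Type} [CommRing R] [CommRing S] (ρ : R →+* S)
    [AddCommGroup M] [Module R M] [AddCommGroup N'] [Module S N']
    (F : M →+ N') (hF : ∀ (a : R) (m : M), F (a • m) = ρ a • F m)
    {ι : Type} (v : ι → M) (w : ι → N') (hvw : ∀ i, F (v i) = w i) (l : ι →₀ R) :
    F (Finsupp.linearCombination R v l) =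
      Finsupp.linearCombination S w (Finsupp.mapRange ρ (map_zero ρ) l) := by
  classical
  rw [Finsupp.linearCombination_apply, Finsupp.linearCombination_apply,
    map_finsuppSum, Finsupp.sum_mapRange_index (by simp)]
  refine Finsupp.sum_congr fun i _ => ?_
  rw [hF, hvw]

/-- A morphism from a free module determined by sections at a bottom point. -/
noncomputable def freeHom (Y : FinRingedSpace) {ι : Type} (N : ModuleData Y) (x₀ : Y.carrier)
    (hx₀ : ∀ q, x₀ ≤ q) (k : ι → N.M x₀) : (Y.free ι).Hom N where
  app q := Finsupp.linearCombination (Y.O q) (fun i => N.res (hx₀ q) (k i))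
  comm {p q} h m :=
    semilinear_linearCombination (Y.res h) (N.res h) (N.res_smul h) _ _
      (fun i => (DFunLike.congr_fun (N.res_trans (hx₀ p) h) (k i)).symm) m

lemma freeHom_app_single (Y : FinRingedSpace) {ι : Type} (N : ModuleData Y) (x₀ : Y.carrier)
    (hx₀ : ∀ q, x₀ ≤ q) (k : ι → N.M x₀) (q : Y.carrier) (i : ι) :
    (Y.freeHom N x₀ hx₀ k).app q (Finsupp.single i 1) = N.res (hx₀ q) (k i) := by
  show Finsupp.linearCombination _ _ (Finsupp.single i 1) = _
  rw [Finsupp.linearCombination_single, one_smul]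

lemma freeHom_app_bot (Y : FinRingedSpace) {ι : Type} (N : ModuleData Y) (x₀ : Y.carrier)
    (hx₀ : ∀ q, x₀ ≤ q) (k : ι → N.M x₀) (i : ι) :
    (Y.freeHom N x₀ hx₀ k).app x₀ (Finsupp.single i 1) = k i := by
  rw [freeHom_app_single]
  rw [show N.res (hx₀ x₀) = N.res (le_refl x₀) from rfl, N.res_refl]
  rfl

end FinRingedSpace

namespace ModuleData

lemma Hom.app_single_one {Y : FinRingedSpace} {N : ModuleData Y} {ι : Type}
    (φ : (Y.free ι).Hom N) {p q : Y.carrier} (h : p ≤ q) (i : ι) :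
    φ.app q (Finsupp.single i 1) = N.res h (φ.app p (Finsupp.single i 1)) := by
  rw [φ.comm h (Finsupp.single i 1)]
  have h1 : ((Y.free ι).res h) (Finsupp.single i (1 : Y.O p)) = Finsupp.single i 1 := by
    show Finsupp.mapRange (Y.res h) (map_zero _) (Finsupp.single i 1) = _
    rw [Finsupp.mapRange_single, map_one]
  rw [h1]

lemma Hom.app_eq_sum {Y : FinRingedSpace} {N : ModuleData Y} {n : ℕ}
    (φ : (Y.free (Fin n)).Hom N) (q : Y.carrier) (l : Fin n →₀ Y.O q) :
    φ.app q l = ∑ i, l i • φ.app q (Finsupp.single i 1) := by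
  conv_lhs => rw [← Finsupp.univ_sum_single l]
  erw [map_sum]
  exact Finset.sum_congr rfl fun i _ => by rw [← Finsupp.smul_single_one]; erw [map_smul]

lemma Hom.res_mem_ker {Y : FinRingedSpace} {M N : ModuleData Y} (φ : M.Hom N)
    {p q : Y.carrier} (h : p ≤ q) {l : M.M p} (hl : l ∈ LinearMap.ker (φ.app p)) :
    M.res h l ∈ LinearMap.ker (φ.app q) := by
  rw [LinearMap.mem_ker, ← φ.comm h, LinearMap.mem_ker.mp hl, map_zero]

lemma res_mem_span_s3 {Y : FinRingedSpace} (N : ModuleData Y) {p q : Y.carrier}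
    (h : p ≤ q) (s : Set (N.M p)) {x : N.M p} (hx : x ∈ Submodule.span (Y.O p) s) :
    N.res h x ∈ Submodule.span (Y.O q) (N.res h '' s) := by
  induction hx using Submodule.span_induction with
  | mem z hz => exact Submodule.subset_span ⟨z, hz, rfl⟩
  | zero => rw [map_zero]; exact Submodule.zero_mem _
  | add u v _ _ hu hv => rw [map_add]; exact Submodule.add_mem _ hu hv
  | smul a z _ hz => rw [N.res_smul]; exact Submodule.smul_mem _ _ hz

end ModuleData

lemma linearMap_finsupp_apply {R M : Type} [CommRing R] [AddCommGroup M] [Module R M]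
    {n : ℕ} (f : (Fin n →₀ R) →ₗ[R] M) (l : Fin n →₀ R) :
    f l = ∑ i, l i • f (Finsupp.single i 1) := by
  conv_lhs => rw [← Finsupp.univ_sum_single l]
  rw [map_sum]
  exact Finset.sum_congr rfl fun i _ => by rw [← Finsupp.smul_single_one, map_smul]

lemma mapRange_mem_span {R S : Type} [CommRing R] [CommRing S] (ρ : R →+* S)
    {ι : Type} (t : Set (ι →₀ R)) {x : ι →₀ R} (hx : x ∈ Submodule.span R t) :
    Finsupp.mapRange ρ (map_zero ρ) x ∈
      Submodule.span S ((fun v => Finsupp.mapRange ρ (map_zero ρ) v) '' t) := by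
  induction hx using Submodule.span_induction with
  | mem z hz => exact Submodule.subset_span ⟨z, hz, rfl⟩
  | zero =>
    have : Finsupp.mapRange ρ (map_zero ρ) (0 : ι →₀ R) = 0 := by
      ext i; simp
    rw [this]; exact Submodule.zero_mem _
  | add u v _ _ hu hv =>
    have : Finsupp.mapRange ρ (map_zero ρ) (u + v) =
        Finsupp.mapRange ρ (map_zero ρ) u + Finsupp.mapRange ρ (map_zero ρ) v := by
      ext i; simp
    rw [this]; exact Submodule.add_mem _ hu hv
  | smul a z _ hz =>
    have : Finsupp.mapRange ρ (map_zero ρ) (a • z) =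
        ρ a • Finsupp.mapRange ρ (map_zero ρ) z := by
      ext i; simp [mul_comm]
    rw [this]; exact Submodule.smul_mem _ _ hz

/-- Key lemma: if `ρ : R → S` is flat and `g : S^n → S` is the base change of `f : R^n → R`,
then the kernel of `g` is spanned by the images of generators of the kernel of `f`. -/
lemma key_span_algebraic {R S : Type} [CommRing R] [CommRing S] (ρ : R →+* S)
    (hflat : letI : Algebra R S := ρ.toAlgebra; Module.Flat R S)
    {n : ℕ} (f : (Fin n →₀ R) →ₗ[R] R) (g : (Fin n →₀ S) →ₗ[S] S)
    (hfg : ∀ i, g (Finsupp.single i 1) = ρ (f (Finsupp.single i 1)))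
    (hker : ∀ {l : Fin n →₀ R}, l ∈ LinearMap.ker f →
      Finsupp.mapRange ρ (map_zero ρ) l ∈ LinearMap.ker g)
    {m : ℕ} {s : Fin m → (Fin n →₀ R)}
    (hs : Submodule.span R (Set.range s) = LinearMap.ker f) :
    Submodule.span S (Set.range fun j => Finsupp.mapRange ρ (map_zero ρ) (s j)) =
      LinearMap.ker g := by
  classical
  letI : Algebra R S := ρ.toAlgebra
  haveI : Module.Flat R S := hflat
  have hsmul : ∀ (a : R) (t : S), a • t = ρ a * t := fun a t => by
    rw [Algebra.smul_def]; rfl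
  set a : Fin n → R := fun i => f (Finsupp.single i 1) with ha
  apply le_antisymm
  · rw [Submodule.span_le]
    rintro _ ⟨j, rfl⟩
    exact hker (hs ▸ Submodule.subset_span (Set.mem_range_self j))
  · intro y hy
    have h0 : ∑ i, y i * ρ (a i) = 0 := by
      rw [← LinearMap.mem_ker.mp hy, linearMap_finsupp_apply g y]
      exact Finset.sum_congr rfl fun i _ => by rw [hfg i, smul_eq_mul]
    have hrel : ∑ i, a i • y i = 0 := by
      rw [← h0]
      exact Finset.sum_congr rfl fun i _ => by rw [hsmul, mul_comm]
    obtain ⟨κ, c, z, hc1, hc2⟩ :=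
      Module.Flat.isTrivialRelation_of_sum_smul_eq_zero (R := R) (M := S)
        (f := a) (x := fun i => y i) hrel
    set K : Fin κ → (Fin n →₀ R) :=
      fun j => Finsupp.equivFunOnFinite.symm (fun i => c i j) with hK
    have hKcoe : ∀ j i, K j i = c i j := fun j i => rfl
    have hKker : ∀ j, K j ∈ LinearMap.ker f := fun j => by
      rw [LinearMap.mem_ker, linearMap_finsupp_apply f (K j), ← hc2 j]
      exact Finset.sum_congr rfl fun i _ => by rw [hKcoe, smul_eq_mul, mul_comm]
    have hFK : ∀ j, Finsupp.mapRange ρ (map_zero ρ) (K j) ∈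
        Submodule.span S (Set.range fun j' => Finsupp.mapRange ρ (map_zero ρ) (s j')) := by
      intro j
      have h1 : K j ∈ Submodule.span R (Set.range s) := by rw [hs]; exact hKker j
      have h2 := mapRange_mem_span ρ _ h1
      have h3 : (fun v => Finsupp.mapRange ρ (map_zero ρ) v) '' Set.range s =
          Set.range fun j' => Finsupp.mapRange ρ (map_zero ρ) (s j') := by
        rw [← Set.range_comp]; rfl
      rwa [h3] at h2
    have hy_eq : y = ∑ j, z j • Finsupp.mapRange ρ (map_zero ρ) (K j) := by
      refine Finsupp.ext fun i => ?_
      rw [Finsupp.finset_sum_apply]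
      have hterm : ∀ j, (z j • Finsupp.mapRange ρ (map_zero ρ) (K j)) i = c i j • z j :=
        fun j => by
          rw [Finsupp.smul_apply, Finsupp.mapRange_apply, hKcoe, smul_eq_mul, hsmul, mul_comm]
      rw [Finset.sum_congr rfl fun j _ => hterm j]
      exact hc1 i
    rw [hy_eq]
    exact Submodule.sum_mem _ fun j _ => Submodule.smul_mem _ _ (hFK j)

lemma surjective_of_single_one {R : Type} [CommRing R] (g : (Fin 1 →₀ R) →ₗ[R] R)
    (hg : g (Finsupp.single 0 1) = 1) : Function.Surjective g := fun t =>
  ⟨t • Finsupp.single 0 1, by rw [map_smul, hg, smul_eq_mul, mul_one]⟩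

lemma surjective_into_submodule {R M : Type} [CommRing R] [AddCommGroup M] [Module R M]
    {P : Submodule R M} {m : ℕ} (g : (Fin m →₀ R) →ₗ[R] P)
    (v : Fin m → M) (hv : ∀ j, (g (Finsupp.single j 1) : M) = v j)
    (hspan : Submodule.span R (Set.range v) = P) : Function.Surjective g := by
  intro t
  have ht : (t : M) ∈ Submodule.span R (Set.range v) := by rw [hspan]; exact t.2
  obtain ⟨c, hc⟩ := Finsupp.mem_span_range_iff_exists_finsupp.mp ht
  refine ⟨c, Subtype.ext ?_⟩
  have h1 : g c = ∑ j, c j • g (Finsupp.single j 1) := linearMap_finsupp_apply g c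
  have h2 : ((g c : P) : M) = ∑ j, c j • v j := by
    rw [h1]
    rw [AddSubmonoidClass.coe_finset_sum]
    exact Finset.sum_congr rfl fun j _ => by rw [SetLike.val_smul, hv j]
  have h3 : (c.sum fun j a => a • v j) = ∑ j, c j • v j :=
    Finsupp.sum_fintype _ _ (fun j => zero_smul _ _)
  rw [h2, ← h3, hc]

/-- Backward direction: coherent stalks + flat restrictions imply the structure sheaf is
coherent. -/
lemma isCoherentSheaf_of {X : FinRingedSpace}
    (hcoh : ∀ p, IsCoherentRing (X.O p))
    (hflat : ∀ {p q : X.carrier} (h : p ≤ q),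
      letI : Algebra (X.O p) (X.O q) := (X.res h).toAlgebra
      Module.Flat (X.O p) (X.O q)) :
    X.structureModule.IsCoherentSheaf := by
  constructor
  · -- finite type
    intro x
    refine ⟨Set.Ici x, X.isOpen_Ici x, le_refl x, 1,
      (X.restrict (Set.Ici x)).freeHom (X.structureModule.restrict (Set.Ici x))
        ⟨x, le_refl x⟩ (fun q => q.2) (fun _ => (1 : X.O x)), fun p => ?_⟩
    refine surjective_of_single_one
      (R := X.O p.1)
      (((X.restrict (Set.Ici x)).freeHom (X.structureModule.restrict (Set.Ici x))
        ⟨x, le_refl x⟩ (fun q => q.2) (fun _ => (1 : X.O x))).app p) ?_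
    exact (FinRingedSpace.freeHom_app_single (X.restrict (Set.Ici x))
      (X.structureModule.restrict (Set.Ici x)) ⟨x, le_refl x⟩ (fun q => q.2)
      (fun _ => (1 : X.O x)) p 0).trans
      (map_one (X.res (Subtype.coe_le_coe.mpr p.2)))
  · -- kernels of finite type
    intro U hU n φ x
    have hkerfg : (LinearMap.ker (φ.app x)).FG :=
      isCoherentRing_iff_ker_fg.mp (hcoh x.1) n (φ.app x)
    obtain ⟨m, s, hs⟩ := Submodule.fg_iff_exists_fin_generating_family.mp hkerfg
    have hmem : ∀ j, s j ∈ LinearMap.ker (φ.app x) := fun j => by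
      rw [← hs]; exact Submodule.subset_span (Set.mem_range_self j)
    refine ⟨Set.Ici x, (X.restrict U).isOpen_Ici x, le_refl x, m,
      ((X.restrict U).restrict (Set.Ici x)).freeHom
        ((ModuleData.kernelData φ).restrict (Set.Ici x))
        ⟨x, le_refl x⟩ (fun r => r.2) (fun j => ⟨s j, hmem j⟩), fun r => ?_⟩
    have hspan := key_span_algebraic (X.res (Subtype.coe_le_coe.mpr (r.2 : x ≤ r.1)))
      (hflat _) (φ.app x) (φ.app r.1)
      (fun i => ModuleData.Hom.app_single_one φ r.2 i)
      (fun {l} hl => ModuleData.Hom.res_mem_ker φ r.2 hl) hs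
    refine surjective_into_submodule
      (R := X.O r.1.1) (M := Fin n →₀ X.O r.1.1) (P := LinearMap.ker (φ.app r.1))
      ((((X.restrict U).restrict (Set.Ici x)).freeHom
        ((ModuleData.kernelData φ).restrict (Set.Ici x))
        ⟨x, le_refl x⟩ (fun r => r.2) (fun j => ⟨s j, hmem j⟩)).app r)
      (fun j => Finsupp.mapRange (X.res (Subtype.coe_le_coe.mpr (r.2 : x ≤ r.1)))
        (map_zero _) (s j)) (fun j => ?_) hspan
    exact congrArg Subtype.val (FinRingedSpace.freeHom_app_single
      ((X.restrict U).restrict (Set.Ici x)) ((ModuleData.kernelData φ).restrict (Set.Ici x))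
      ⟨x, le_refl x⟩ (fun r => r.2) (fun j => ⟨s j, hmem j⟩) r j)

/-- Forward direction: a coherent structure sheaf has coherent stalks. -/
lemma coherentRing_of_isCoherentSheaf {X : FinRingedSpace}
    (h : X.structureModule.IsCoherentSheaf) (p : X.carrier) : IsCoherentRing (X.O p) := by
  rw [isCoherentRing_iff_ker_fg]
  intro n f
  set U : Set X.carrier := Set.Ici p with hU
  set x₀ : (X.restrict U).carrier := ⟨p, le_refl p⟩ with hx₀def
  set φ := (X.restrict U).freeHom (X.structureModule.restrict U) x₀ (fun r => r.2)
    (fun i => f (Finsupp.single i 1)) with hφ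
  obtain ⟨V, hVopen, hxV, m, ψ, hψ⟩ := h.2 U (X.isOpen_Ici p) n φ x₀
  set F0 : (Fin n →₀ X.O p) →ₗ[X.O p] X.O p := φ.app x₀ with hF0
  have happ : ∀ l : Fin n →₀ X.O p, F0 l = f l := by
    intro l
    have h1 : F0 l = ∑ i, l i • F0 (Finsupp.single i 1) := linearMap_finsupp_apply F0 l
    have h2 : f l = ∑ i, l i • f (Finsupp.single i 1) := linearMap_finsupp_apply f l
    rw [h1, h2]
    refine Finset.sum_congr rfl fun i _ => ?_
    have h3 : F0 (Finsupp.single i 1) = f (Finsupp.single i 1) :=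
      FinRingedSpace.freeHom_app_bot (X.restrict U) (X.structureModule.restrict U)
        x₀ (fun r => r.2) (fun i => f (Finsupp.single i 1)) i
    rw [h3]
  have hkereq : LinearMap.ker F0 = LinearMap.ker f := by
    have heq : F0 = f := LinearMap.ext happ
    rw [heq]
  have hfin : Module.Finite (X.O p) ↥(LinearMap.ker F0) :=
    Module.Finite.of_surjective (R := X.O p) (M := Fin m →₀ X.O p)
      (P := ↥(LinearMap.ker F0)) (ψ.app ⟨x₀, hxV⟩) (hψ ⟨x₀, hxV⟩)
  exact hkereq ▸ Module.Finite.iff_fg.mp hfin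

/-- Forward direction: a coherent structure sheaf has flat restriction maps. -/
lemma flat_of_isCoherentSheaf {X : FinRingedSpace}
    (h : X.structureModule.IsCoherentSheaf) {p q : X.carrier} (hpq : p ≤ q) :
    letI : Algebra (X.O p) (X.O q) := (X.res hpq).toAlgebra
    Module.Flat (X.O p) (X.O q) := by
  letI : Algebra (X.O p) (X.O q) := (X.res hpq).toAlgebra
  have hsmul : ∀ (a : X.O p) (t : X.O q), a • t = X.res hpq a * t := fun a t => by
    rw [Algebra.smul_def]; rfl
  apply Module.Flat.of_forall_isTrivialRelation
  intro l f y hrel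
  obtain ⟨e⟩ : Nonempty (Fin l ≃ Fin (Fintype.card (Fin l))) := ⟨Fintype.equivFin (Fin l)⟩
  set n := Fintype.card (Fin l) with hn
  set U : Set X.carrier := Set.Ici p with hU
  set x₀ : (X.restrict U).carrier := ⟨p, le_refl p⟩ with hx₀def
  set qu : (X.restrict U).carrier := ⟨q, hpq⟩ with hqudef
  have hx₀qu : x₀ ≤ qu := Subtype.mk_le_mk.mpr hpq
  set φ := (X.restrict U).freeHom (X.structureModule.restrict U) x₀ (fun r => r.2)
    (fun i => f (e.symm i)) with hφ
  obtain ⟨V, hVopen, hxV, m, ψ, hψ⟩ := h.2 U (X.isOpen_Ici p) n φ x₀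
  have hqV : qu ∈ V := hVopen hxV hx₀qu
  set rp : ((X.restrict U).restrict V).carrier := ⟨x₀, hxV⟩ with hrpdef
  set rq : ((X.restrict U).restrict V).carrier := ⟨qu, hqV⟩ with hrqdef
  have hrr : rp ≤ rq := Subtype.mk_le_mk.mpr hx₀qu
  set Fp : (Fin n →₀ X.O p) →ₗ[X.O p] X.O p := φ.app x₀ with hFp
  set Fq : (Fin n →₀ X.O q) →ₗ[X.O q] X.O q := φ.app qu with hFq
  set yy : Fin n →₀ X.O q := Finsupp.equivFunOnFinite.symm (fun i => y (e.symm i)) with hyyde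
  have hyycoe : ∀ i, yy i = y (e.symm i) := fun i => rfl
  have happ_q : ∀ i, Fq (Finsupp.single i 1) = X.res hpq (f (e.symm i)) := fun i =>
    FinRingedSpace.freeHom_app_single (X.restrict U) (X.structureModule.restrict U)
      x₀ (fun r => r.2) (fun i => f (e.symm i)) qu i
  have hyyker : Fq yy = 0 := by
    have h1 : Fq yy = ∑ i, yy i • Fq (Finsupp.single i 1) := linearMap_finsupp_apply Fq yy
    rw [h1]
    calc ∑ i, yy i • Fq (Finsupp.single i 1)
        = ∑ i : Fin n, f (e.symm i) • y (e.symm i) := Finset.sum_congr rfl fun i _ => by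
          rw [happ_q i, hyycoe i, smul_eq_mul, hsmul, mul_comm]
      _ = ∑ j, f j • y j := Fintype.sum_equiv e.symm _ _ (fun i => rfl)
      _ = 0 := hrel
  obtain ⟨w, hw⟩ := hψ rq ⟨yy, LinearMap.mem_ker.mpr hyyker⟩
  set ww : Fin m →₀ X.O q := w with hww
  set lam : Fin m → ↥(LinearMap.ker Fp) :=
    fun j => ψ.app rp (Finsupp.single j 1) with hlam
  set lamc : Fin m → (Fin n →₀ X.O p) := fun j => (lam j : Fin n →₀ X.O p) with hlamc
  set L : ↥(LinearMap.ker Fq) →ₗ[X.O q] (Fin n →₀ X.O q) :=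
    Submodule.subtype (LinearMap.ker Fq) with hL
  set G : (Fin m →₀ X.O q) →ₗ[X.O q] (Fin n →₀ X.O q) := L ∘ₗ (ψ.app rq) with hG
  have h5 : G ww = yy := congrArg L hw
  have h6 : G ww = ∑ j, ww j • Finsupp.mapRange (X.res hpq) (map_zero _) (lamc j) := by
    rw [linearMap_finsupp_apply G ww]
    refine Finset.sum_congr rfl fun j _ => ?_
    congr 1
    calc G (Finsupp.single j 1)
        = L (ψ.app rq (Finsupp.single j 1)) := rfl
      _ = L (((ModuleData.kernelData φ).restrict V).res hrr (ψ.app rp (Finsupp.single j 1))) :=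
          congrArg L (ModuleData.Hom.app_single_one ψ hrr j)
      _ = Finsupp.mapRange (X.res hpq) (map_zero _) (lamc j) := rfl
  have hyyeq : yy = ∑ j, ww j • Finsupp.mapRange (X.res hpq) (map_zero _) (lamc j) :=
    h5.symm.trans h6
  have h7 : ∀ i0 : Fin l, y i0 = ∑ j, (lamc j (e i0)) • ww j := by
    intro i0
    have h8 : yy (e i0) = y i0 := by rw [hyycoe (e i0), Equiv.symm_apply_apply]
    rw [← h8, hyyeq, Finsupp.finset_sum_apply]
    exact Finset.sum_congr rfl fun j _ => by
      rw [Finsupp.smul_apply, Finsupp.mapRange_apply, smul_eq_mul, hsmul, mul_comm]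
  have h9 : ∀ j, ∑ i0 : Fin l, f i0 * (lamc j (e i0)) = 0 := by
    intro j
    have h11 : Fp (lamc j) = 0 := LinearMap.mem_ker.mp (lam j).2
    rw [linearMap_finsupp_apply Fp (lamc j)] at h11
    have h12 : ∀ i' : Fin n, Fp (Finsupp.single i' 1) = f (e.symm i') := fun i' =>
      FinRingedSpace.freeHom_app_bot (X.restrict U) (X.structureModule.restrict U)
        x₀ (fun r => r.2) (fun i => f (e.symm i)) i'
    calc ∑ i0 : Fin l, f i0 * (lamc j (e i0))
        = ∑ i' : Fin n, f (e.symm i') * (lamc j i') := by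
          refine Fintype.sum_equiv e _ _ fun i0 => ?_
          rw [Equiv.symm_apply_apply]
      _ = ∑ i' : Fin n, lamc j i' • Fp (Finsupp.single i' 1) :=
          Finset.sum_congr rfl fun i' _ => by rw [h12 i', smul_eq_mul, mul_comm]
      _ = 0 := h11
  exact ⟨m, fun i0 j => lamc j (e i0), fun j => ww j, h7, h9⟩

end CoherentAux

/-! ## STATEMENT 3
The structure sheaf `O_X` of a ringed finite space is coherent (as a module over itself) iff
(a) every stalk `O_p` is a coherent ring, and (b) every restriction map `O_p → O_q`
(`p ≤ q`) is flat.  In particular, if all stalks are noetherian rings, `O_X` is coherent iff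
all restriction maps are flat. -/
theorem structureSheaf_coherent_iff (X : FinRingedSpace) :
    (X.structureModule.IsCoherentSheaf ↔
      (∀ p : X.carrier, IsCoherentRing (X.O p)) ∧
      (∀ {p q : X.carrier} (h : p ≤ q),
        letI : Algebra (X.O p) (X.O q) := (X.res h).toAlgebra
        Module.Flat (X.O p) (X.O q))) ∧
    ((∀ p : X.carrier, IsNoetherianRing (X.O p)) →
      (X.structureModule.IsCoherentSheaf ↔
        (∀ {p q : X.carrier} (h : p ≤ q),
          letI : Algebra (X.O p) (X.O q) := (X.res h).toAlgebra
          Module.Flat (X.O p) (X.O q)))) := by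
  have main : X.structureModule.IsCoherentSheaf ↔
      (∀ p : X.carrier, IsCoherentRing (X.O p)) ∧
      (∀ {p q : X.carrier} (h : p ≤ q),
        letI : Algebra (X.O p) (X.O q) := (X.res h).toAlgebra
        Module.Flat (X.O p) (X.O q)) := by
    constructor
    · intro hc
      exact ⟨fun p => coherentRing_of_isCoherentSheaf hc p,
        fun {p q} h => flat_of_isCoherentSheaf hc h⟩
    · rintro ⟨h1, h2⟩
      exact isCoherentSheaf_of h1 (fun {p q} h => h2 h)
  refine ⟨main, fun hnoeth => ?_⟩
  constructor
  · intro hc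
    exact fun {p q} h => flat_of_isCoherentSheaf hc h
  · intro h2
    exact isCoherentSheaf_of (fun p => isCoherentRing_of_noetherian _ (hnoeth p))
      (fun {p q} h => h2 h)
end

section
/- Let (X,O_X) be a finite space, i.e., a ringed finite space all of whose restriction maps O_p → O_q (p ≤ q) are flat. Then the kernel of any morphism between quasi-coherent O_X-modules is quasi-coherent. Moreover, if 0 → M' → M → M'' → 0 is an exact sequence of O_X-modules and two of the three modules are quasi-coherent, then so is the third. Consequently the quasi-coherent O_X-modules form an abelian subcategory of the category of O_X-modules. -/
open TensorProduct

/-- A short exact sequence `0 → M' → M → M'' → 0` of sheaves of modules on a finite space: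
exactness is measured stalkwise (on a finite topological space the stalk functors are exact
and jointly conservative). -/
def ModuleData.IsShortExact {X : FinRingedSpace} {M' M M'' : ModuleData X}
    (i : M'.Hom M) (pr : M.Hom M'') : Prop :=
  (∀ p, Function.Injective (i.app p)) ∧
  (∀ p, LinearMap.range (i.app p) = LinearMap.ker (pr.app p)) ∧
  (∀ p, Function.Surjective (pr.app p))

/-! ## Auxiliary lemmas for Statement 7 -/

section Chase

variable {A₁ B₁ C₁ A₂ B₂ C₂ : Type*} [AddCommGroup A₁] [AddCommGroup B₁] [AddCommGroup C₁]
  [AddCommGroup A₂] [AddCommGroup B₂] [AddCommGroup C₂]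
  (f₁ : A₁ →+ B₁) (g₁ : B₁ →+ C₁) (f₂ : A₂ →+ B₂) (g₂ : B₂ →+ C₂)
  (α : A₁ →+ A₂) (β : B₁ →+ B₂) (γ : C₁ →+ C₂)

lemma chase_left
    (comm₁ : ∀ a, β (f₁ a) = f₂ (α a)) (comm₂ : ∀ b, γ (g₁ b) = g₂ (β b))
    (hf₁ : Function.Injective f₁) (hf₂ : Function.Injective f₂)
    (hexact₁ : ∀ b, g₁ b = 0 → ∃ a, f₁ a = b)
    (hcomp₂ : ∀ a, g₂ (f₂ a) = 0)
    (hβ : Function.Bijective β) (hγ : Function.Injective γ) :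
    Function.Bijective α := by
  constructor
  · intro a a' hEq
    exact hf₁ (hβ.1 (by rw [comm₁, comm₁, hEq]))
  · intro a₂
    obtain ⟨b₁, hb₁⟩ := hβ.2 (f₂ a₂)
    have h2 : g₁ b₁ = 0 := hγ (by rw [comm₂, hb₁, hcomp₂, map_zero])
    obtain ⟨a₁, ha₁⟩ := hexact₁ b₁ h2
    exact ⟨a₁, hf₂ (by rw [← comm₁, ha₁, hb₁])⟩

lemma chase_mid
    (comm₁ : ∀ a, β (f₁ a) = f₂ (α a)) (comm₂ : ∀ b, γ (g₁ b) = g₂ (β b))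
    (hf₂ : Function.Injective f₂) (hg₁ : Function.Surjective g₁)
    (hexact₁ : ∀ b, g₁ b = 0 → ∃ a, f₁ a = b)
    (hexact₂ : ∀ b, g₂ b = 0 → ∃ a, f₂ a = b)
    (hα : Function.Bijective α) (hγ : Function.Bijective γ) :
    Function.Bijective β := by
  constructor
  · intro b b' hEq
    have hb : β (b - b') = 0 := by rw [map_sub, hEq, sub_self]
    have h2 : g₁ (b - b') = 0 := hγ.1 (by rw [comm₂, hb, map_zero, map_zero])
    obtain ⟨a, ha⟩ := hexact₁ _ h2
    have ha0 : α a = 0 := hf₂ (by rw [← comm₁, ha, hb, map_zero])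
    have ha' : a = 0 := hα.1 (by rw [ha0, map_zero])
    have : b - b' = 0 := by rw [← ha, ha', map_zero]
    exact sub_eq_zero.mp this
  · intro b₂
    obtain ⟨c₁, hc₁⟩ := hγ.2 (g₂ b₂)
    obtain ⟨b₁, hb₁⟩ := hg₁ c₁
    have h0 : g₂ (b₂ - β b₁) = 0 := by rw [map_sub, ← comm₂, hb₁, hc₁, sub_self]
    obtain ⟨a₂, ha₂⟩ := hexact₂ _ h0
    obtain ⟨a₁, rfl⟩ := hα.2 a₂
    exact ⟨b₁ + f₁ a₁, by rw [map_add, comm₁, ha₂]; abel⟩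

lemma chase_right
    (comm₁ : ∀ a, β (f₁ a) = f₂ (α a)) (comm₂ : ∀ b, γ (g₁ b) = g₂ (β b))
    (hg₁ : Function.Surjective g₁) (hg₂ : Function.Surjective g₂)
    (hcomp₁ : ∀ a, g₁ (f₁ a) = 0)
    (hexact₂ : ∀ b, g₂ b = 0 → ∃ a, f₂ a = b)
    (hα : Function.Surjective α) (hβ : Function.Bijective β) :
    Function.Bijective γ := by
  constructor
  · intro c c' hEq
    have hc : γ (c - c') = 0 := by rw [map_sub, hEq, sub_self]
    obtain ⟨b₁, hb₁⟩ := hg₁ (c - c')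
    have h2 : g₂ (β b₁) = 0 := by rw [← comm₂, hb₁, hc]
    obtain ⟨a₂, ha₂⟩ := hexact₂ _ h2
    obtain ⟨a₁, rfl⟩ := hα a₂
    have hb : b₁ = f₁ a₁ := hβ.1 (by rw [comm₁, ha₂])
    have : c - c' = 0 := by rw [← hb₁, hb, hcomp₁]
    exact sub_eq_zero.mp this
  · intro c₂
    obtain ⟨b₂, rfl⟩ := hg₂ c₂
    obtain ⟨b₁, rfl⟩ := hβ.2 b₂
    exact ⟨g₁ b₁, comm₂ b₁⟩

end Chase

namespace ModuleData

lemma baseChangeMap_tmul_s6 {X : FinRingedSpace} (N : ModuleData X) {p q : X.carrier} (h : p ≤ q) :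
    letI : Algebra (X.O p) (X.O q) := (X.res h).toAlgebra
    ∀ (m : N.M p) (s : X.O q), N.baseChangeMap h (m ⊗ₜ[X.O p] s) = s • N.res h m := by
  letI : Algebra (X.O p) (X.O q) := (X.res h).toAlgebra
  intro m s
  rfl

lemma baseChangeMap_comm {X : FinRingedSpace} {M N : ModuleData X} (φ : M.Hom N)
    {p q : X.carrier} (h : p ≤ q) :
    letI : Algebra (X.O p) (X.O q) := (X.res h).toAlgebra
    ∀ x : M.M p ⊗[X.O p] (X.O q),
      N.baseChangeMap h (LinearMap.rTensor (X.O q) (φ.app p) x) =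
        φ.app q (M.baseChangeMap h x) := by
  letI : Algebra (X.O p) (X.O q) := (X.res h).toAlgebra
  intro x
  induction x using TensorProduct.induction_on with
  | zero => simp
  | tmul m s =>
      rw [LinearMap.rTensor_tmul, N.baseChangeMap_tmul_s6 h, M.baseChangeMap_tmul_s6 h,
        φ.comm h, map_smul]
  | add x y hx hy => simp only [map_add, hx, hy]

lemma baseChangeMap_kernel_comm {X : FinRingedSpace} {M N : ModuleData X} (φ : M.Hom N)
    {p q : X.carrier} (h : p ≤ q) :
    letI : Algebra (X.O p) (X.O q) := (X.res h).toAlgebra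
    ∀ x : (LinearMap.ker (φ.app p) : Type) ⊗[X.O p] (X.O q),
      M.baseChangeMap h (LinearMap.rTensor (X.O q) (LinearMap.ker (φ.app p)).subtype x) =
        (LinearMap.ker (φ.app q)).subtype ((ModuleData.kernelData φ).baseChangeMap h x) := by
  letI : Algebra (X.O p) (X.O q) := (X.res h).toAlgebra
  intro x
  induction x using TensorProduct.induction_on with
  | zero => simp; exact (congrArg Subtype.val (map_zero ((ModuleData.kernelData φ).baseChangeMap h))).symm
  | tmul m s =>
      rw [LinearMap.rTensor_tmul, M.baseChangeMap_tmul_s6 h]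
      exact (congrArg Subtype.val ((ModuleData.kernelData φ).baseChangeMap_tmul_s6 h m s)).symm
  | add x y hx hy => simp only [map_add, hx, hy]; exact (congrArg Subtype.val (map_add ((ModuleData.kernelData φ).baseChangeMap h) x y)).symm

end ModuleData

/-! ## STATEMENT 7
On a finite space (ringed finite space with flat restriction maps): kernels of morphisms of
quasi-coherent modules are quasi-coherent, and in a short exact sequence of `O_X`-modules in
which two of the three terms are quasi-coherent, so is the third.  (Consequently the
quasi-coherent modules form an abelian subcategory of the `O_X`-modules.) -/
theorem kernel_quasiCoherent_and_two_out_of_three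
    (X : FinRingedSpace) (hX : X.IsFiniteSpace) :
    (∀ (M N : ModuleData X) (φ : M.Hom N), M.IsQuasiCoherent → N.IsQuasiCoherent →
      (ModuleData.kernelData φ).IsQuasiCoherent) ∧
    (∀ (M' M M'' : ModuleData X) (i : M'.Hom M) (pr : M.Hom M''),
      ModuleData.IsShortExact i pr →
        ((M'.IsQuasiCoherent → M.IsQuasiCoherent → M''.IsQuasiCoherent) ∧
         (M'.IsQuasiCoherent → M''.IsQuasiCoherent → M.IsQuasiCoherent) ∧
         (M.IsQuasiCoherent → M''.IsQuasiCoherent → M'.IsQuasiCoherent))) := by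
  constructor
  · intro M N φ hM hN p q h
    letI : Algebra (X.O p) (X.O q) := (X.res h).toAlgebra
    haveI : Module.Flat (X.O p) (X.O q) := hX h
    have hex : Function.Exact (LinearMap.ker (φ.app p)).subtype (φ.app p) :=
      LinearMap.exact_subtype_ker_map (φ.app p)
    have hexT := Module.Flat.rTensor_exact (X.O q) hex
    exact chase_left
      (LinearMap.rTensor (X.O q) (LinearMap.ker (φ.app p)).subtype).toAddMonoidHom
      (LinearMap.rTensor (X.O q) (φ.app p)).toAddMonoidHom
      (LinearMap.ker (φ.app q)).subtype.toAddMonoidHom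
      (φ.app q).toAddMonoidHom
      ((ModuleData.kernelData φ).baseChangeMap h)
      (M.baseChangeMap h) (N.baseChangeMap h)
      (fun a => ModuleData.baseChangeMap_kernel_comm φ h a)
      (fun b => ModuleData.baseChangeMap_comm φ h b)
      (Module.Flat.rTensor_preserves_injective_linearMap _ (Submodule.injective_subtype _))
      (Submodule.injective_subtype _)
      (fun b hb => (hexT b).mp hb)
      (fun a => a.2)
      (hM h) (hN h).1
  · intro M' M M'' i pr hse
    obtain ⟨hinj, hexact, hsurj⟩ := hse
    refine ⟨?_, ?_, ?_⟩
    · intro h1 h2 p q h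
      letI : Algebra (X.O p) (X.O q) := (X.res h).toAlgebra
      haveI : Module.Flat (X.O p) (X.O q) := hX h
      have hex : Function.Exact (i.app p) (pr.app p) := LinearMap.exact_iff.mpr (hexact p).symm
      have hexT := Module.Flat.rTensor_exact (X.O q) hex
      have hbot : Function.Exact (i.app q) (pr.app q) := LinearMap.exact_iff.mpr (hexact q).symm
      exact chase_right
        (LinearMap.rTensor (X.O q) (i.app p)).toAddMonoidHom
        (LinearMap.rTensor (X.O q) (pr.app p)).toAddMonoidHom
        (i.app q).toAddMonoidHom (pr.app q).toAddMonoidHom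
        (M'.baseChangeMap h) (M.baseChangeMap h) (M''.baseChangeMap h)
        (fun a => ModuleData.baseChangeMap_comm i h a)
        (fun b => ModuleData.baseChangeMap_comm pr h b)
        (LinearMap.rTensor_surjective (X.O q) (hsurj p))
        (hsurj q)
        (fun a => (hexT _).mpr ⟨a, rfl⟩)
        (fun b hb => (hbot b).mp hb)
        (h1 h).2 (h2 h)
    · intro h1 h2 p q h
      letI : Algebra (X.O p) (X.O q) := (X.res h).toAlgebra
      haveI : Module.Flat (X.O p) (X.O q) := hX h
      have hex : Function.Exact (i.app p) (pr.app p) := LinearMap.exact_iff.mpr (hexact p).symm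
      have hexT := Module.Flat.rTensor_exact (X.O q) hex
      have hbot : Function.Exact (i.app q) (pr.app q) := LinearMap.exact_iff.mpr (hexact q).symm
      exact chase_mid
        (LinearMap.rTensor (X.O q) (i.app p)).toAddMonoidHom
        (LinearMap.rTensor (X.O q) (pr.app p)).toAddMonoidHom
        (i.app q).toAddMonoidHom (pr.app q).toAddMonoidHom
        (M'.baseChangeMap h) (M.baseChangeMap h) (M''.baseChangeMap h)
        (fun a => ModuleData.baseChangeMap_comm i h a)
        (fun b => ModuleData.baseChangeMap_comm pr h b)
        (hinj q)
        (LinearMap.rTensor_surjective (X.O q) (hsurj p))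
        (fun b hb => (hexT b).mp hb)
        (fun b hb => (hbot b).mp hb)
        (h1 h) (h2 h)
    · intro h1 h2 p q h
      letI : Algebra (X.O p) (X.O q) := (X.res h).toAlgebra
      haveI : Module.Flat (X.O p) (X.O q) := hX h
      have hex : Function.Exact (i.app p) (pr.app p) := LinearMap.exact_iff.mpr (hexact p).symm
      have hexT := Module.Flat.rTensor_exact (X.O q) hex
      have hbot : Function.Exact (i.app q) (pr.app q) := LinearMap.exact_iff.mpr (hexact q).symm
      exact chase_left
        (LinearMap.rTensor (X.O q) (i.app p)).toAddMonoidHom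
        (LinearMap.rTensor (X.O q) (pr.app p)).toAddMonoidHom
        (i.app q).toAddMonoidHom (pr.app q).toAddMonoidHom
        (M'.baseChangeMap h) (M.baseChangeMap h) (M''.baseChangeMap h)
        (fun a => ModuleData.baseChangeMap_comm i h a)
        (fun b => ModuleData.baseChangeMap_comm pr h b)
        (Module.Flat.rTensor_preserves_injective_linearMap _ (hinj p))
        (hinj q)
        (fun b hb => (hexT b).mp hb)
        (fun a => (hbot _).mpr ⟨a, rfl⟩)
        (h1 h) (h2 h).1
end
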